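/- There exist a concurrent epistemic game structure M, an agent a, a set of states P ⊆ St, and a state q such that M,q ⊨ ⟨⟨{a}⟩⟩◇P, yet q does not belong to the least fixpoint of the monotone operator X ↦ K_a P ∪ ⟨{a}⟩•X. (The steadfast fixpoint lower bound for reachability is not tight in general.) -/

import Mathlib

/-- A concurrent epistemic game structure (iCGS). -/
structure CEGS where
  Agt : Type
  St : Type
  AP : Type
  Act : Type
  agtFin : Finite Agt
  agtNe : Nonempty Agt
  stNe : Nonempty St
  actFin : Finite Act
  actNe : Nonempty Act
  V : AP → Set St
  d : Agt → St → Set Act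
  d_ne : ∀ a q, (d a q).Nonempty
  o : St → (Agt → Act) → St
  sim : Agt → St → St → Prop
  sim_equiv : ∀ a, Equivalence (sim a)
  uniform : ∀ a q q', sim a q q' → d a q = d a q'

namespace CEGS

variable (M : CEGS)

/-- An action profile available at state `q`. -/
def Avail (q : M.St) (α : M.Agt → M.Act) : Prop := ∀ a, α a ∈ M.d a q

/-- A path: an infinite sequence of states, each next state being the outcome of
some available action profile. -/
def IsPath (lam : ℕ → M.St) : Prop :=
  ∀ i, ∃ α, M.Avail (lam i) α ∧ lam (i + 1) = M.o (lam i) α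

/-- `s` is a collective ir-strategy (uniform, memoryless) for coalition `A`. -/
def IsIrStrat (A : Set M.Agt) (s : M.Agt → M.St → M.Act) : Prop :=
  ∀ a ∈ A, (∀ q, s a q ∈ M.d a q) ∧ (∀ q q', M.sim a q q' → s a q = s a q')

/-- `s` is a collective Ir-strategy (perfect information, memoryless) for coalition `A`. -/
def IsIrStratPI (A : Set M.Agt) (s : M.Agt → M.St → M.Act) : Prop :=
  ∀ a ∈ A, ∀ q, s a q ∈ M.d a q

/-- `lam ∈ out(q, s_A)`: a path starting at `q` along which every agent of `A` plays `s`. -/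
def InOut (A : Set M.Agt) (s : M.Agt → M.St → M.Act) (q : M.St) (lam : ℕ → M.St) : Prop :=
  lam 0 = q ∧ ∀ i, ∃ α, M.Avail (lam i) α ∧ (∀ a ∈ A, α a = s a (lam i)) ∧
    lam (i + 1) = M.o (lam i) α

/-- `lam ∈ out^ir(q, s_A) = ⋃_{a∈A} ⋃_{q ∼_a q'} out(q', s_A)`. -/
def InOutIr (A : Set M.Agt) (s : M.Agt → M.St → M.Act) (q : M.St) (lam : ℕ → M.St) : Prop :=
  ∃ a ∈ A, ∃ q', M.sim a q q' ∧ M.InOut A s q' lam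

/-- The "everybody knows" relation `∼_A^E = ⋃_{a∈A} ∼_a`. -/
def simE (A : Set M.Agt) (q q' : M.St) : Prop := ∃ a ∈ A, M.sim a q q'

/-- The "common knowledge" relation `∼_A^C`: transitive closure of `∼_A^E`. -/
def simC (A : Set M.Agt) : M.St → M.St → Prop := Relation.TransGen (M.simE A)

/-- Individual knowledge: `K_a X`. -/
def Know (a : M.Agt) (X : Set M.St) : Set M.St := {q | ∀ q', M.sim a q q' → q' ∈ X}

/-- Mutual knowledge: `E_A X`. -/
def EKnow (A : Set M.Agt) (X : Set M.St) : Set M.St := {q | ∀ q', M.simE A q q' → q' ∈ X}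

/-- Common knowledge: `C_A X`. -/
def CKnow (A : Set M.Agt) (X : Set M.St) : Set M.St := {q | ∀ q', M.simC A q q' → q' ∈ X}

/-- Next-step operator `⟨A⟩X` (imperfect information). -/
def Next (A : Set M.Agt) (X : Set M.St) : Set M.St :=
  {q | ∃ s, M.IsIrStrat A s ∧ ∀ lam, M.InOutIr A s q lam → lam 1 ∈ X}

/-- `Reach_M(s_A, Q, X)`. -/
def ReachSet (A : Set M.Agt) (s : M.Agt → M.St → M.Act) (Q X : Set M.St) : Set M.St :=
  {q | q ∈ Q ∧ ∀ lam, M.InOut A s q lam → ∃ i, lam i ∈ X ∧ ∀ j < i, lam j ∈ Q}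

/-- Steadfast next-step operator `⟨A⟩•X`. -/
def NextStead (A : Set M.Agt) (X : Set M.St) : Set M.St :=
  {q | ∃ s, M.IsIrStrat A s ∧
    M.ReachSet A s {q' | M.simC A q q'} X = {q' | M.simC A q q'}}

/-- `M,q ⊨ ⟨⟨A⟩⟩◇P` (ATLir reachability, ir-strategies). -/
def CanReach (A : Set M.Agt) (P : Set M.St) (q : M.St) : Prop :=
  ∃ s, M.IsIrStrat A s ∧ ∀ lam, M.InOutIr A s q lam → ∃ i, lam i ∈ P

/-- `M,q ⊨ ⟨⟨A⟩⟩□P` (ATLir safety, ir-strategies). -/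
def CanGlobally (A : Set M.Agt) (P : Set M.St) (q : M.St) : Prop :=
  ∃ s, M.IsIrStrat A s ∧ ∀ lam, M.InOutIr A s q lam → ∀ i, lam i ∈ P

/-- `M,q ⊨ ⟨⟨A⟩⟩ S U P` (ATLir until, ir-strategies). -/
def CanUntil (A : Set M.Agt) (S P : Set M.St) (q : M.St) : Prop :=
  ∃ s, M.IsIrStrat A s ∧ ∀ lam, M.InOutIr A s q lam →
    ∃ i, lam i ∈ P ∧ ∀ j < i, lam j ∈ S

/-- Perfect-information next-step operator `N^Ir_A(X)`. -/
def NextPI (A : Set M.Agt) (X : Set M.St) : Set M.St :=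
  {q | ∃ t, M.IsIrStratPI A t ∧ ∀ lam, M.InOut A t q lam → lam 1 ∈ X}

/-- Perfect-information "globally" operator `G^Ir_A(X)`. -/
def GloballyPI (A : Set M.Agt) (X : Set M.St) : Set M.St :=
  {q | ∃ t, M.IsIrStratPI A t ∧ ∀ lam, M.InOut A t q lam → ∀ i, lam i ∈ X}

/-- Perfect-information "until" operator `U^Ir_A(Y, X)`. -/
def UntilPI (A : Set M.Agt) (Y X : Set M.St) : Set M.St :=
  {q | ∃ t, M.IsIrStratPI A t ∧ ∀ lam, M.InOut A t q lam →
    ∃ i, lam i ∈ X ∧ ∀ j < i, lam j ∈ Y}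

end CEGS

/-- Knaster–Tarski least fixpoint of a set operator. -/
def lfpSet {σ : Type} (f : Set σ → Set σ) : Set σ := sInf {X | f X ⊆ X}

/-- Knaster–Tarski greatest fixpoint of a set operator. -/
def gfpSet {σ : Type} (f : Set σ → Set σ) : Set σ := sSup {X | X ⊆ f X}

/-! Every play reaches `4` within three steps, so `⟨⟨a⟩⟩◇{4}` holds everywhere. The agent cannot
tell `0` from `1`, nor `2` from `3`, and the play from `0` (to `2`) as well as the play from `2`
(to `1`) leaves its class before reaching `4`. Hence `⟨a⟩•{4} ⊆ {4} = K_a {4}`, so `{4}` is a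
prefixed point and the least fixpoint misses `0`. -/

lemma lfpSet_subset_of_prefixed {σ : Type} {f : Set σ → Set σ} {X : Set σ} (h : f X ⊆ X) :
    lfpSet f ⊆ X :=
  sInf_le h

namespace CEGS

variable {M : CEGS}

lemma know_subset (a : M.Agt) (X : Set M.St) : M.Know a X ⊆ X :=
  fun q hq => hq q ((M.sim_equiv a).refl q)

lemma simC_of_sim {A : Set M.Agt} {a : M.Agt} (ha : a ∈ A) {q q' : M.St} (h : M.sim a q q') :
    M.simC A q q' :=
  Relation.TransGen.single ⟨a, ha, h⟩

open Classical in
lemma exists_inOut {A : Set M.Agt} {s : M.Agt → M.St → M.Act} (hs : M.IsIrStrat A s)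
    (q : M.St) : ∃ lam, M.InOut A s q lam := by
  let α : M.St → M.Agt → M.Act := fun p a => if a ∈ A then s a p else (M.d_ne a p).some
  have hα : ∀ p, M.Avail p (α p) := fun p a => by
    by_cases ha : a ∈ A
    · simpa only [α, if_pos ha] using (hs a ha).1 p
    · simpa only [α, if_neg ha] using (M.d_ne a p).some_mem
  refine ⟨fun n => (fun p => M.o p (α p))^[n] q, rfl, fun i => ⟨α _, hα _, ?_, ?_⟩⟩
  · intro a ha
    simp only [α, if_pos ha]
  · exact Function.iterate_succ_apply' _ i q

lemma InOut.eq_iterate {f : M.St → M.St} (hf : ∀ p α, M.o p α = f p) {A : Set M.Agt}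
    {s : M.Agt → M.St → M.Act} {q : M.St} {lam : ℕ → M.St} (h : M.InOut A s q lam) (n : ℕ) :
    lam n = f^[n] q := by
  induction n with
  | zero => exact h.1
  | succ n ih =>
    obtain ⟨α, -, -, hstep⟩ := h.2 n
    rw [hstep, hf, ih, Function.iterate_succ_apply']

lemma not_mem_nextStead_of_forced_exit {A : Set M.Agt} {X : Set M.St} {q b c : M.St}
    (hb : M.simC A q b) (hbX : b ∉ X) (hcX : c ∉ X) (hc : ¬ M.simC A q c)
    (hforced : ∀ α, M.Avail b α → M.o b α = c) : q ∉ M.NextStead A X := by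
  rintro ⟨s, hs, hreach⟩
  obtain ⟨lam, hlam⟩ := exists_inOut hs b
  have hlam1 : lam 1 = c := by
    obtain ⟨α, hα, -, hstep⟩ := hlam.2 0
    rw [hstep, hlam.1, hforced α (hlam.1 ▸ hα)]
  obtain ⟨-, hbreach⟩ := hreach.symm.subset hb
  obtain ⟨i, hiX, hbefore⟩ := hbreach lam hlam
  match i with
  | 0 => exact hbX (hlam.1 ▸ hiX)
  | 1 => exact hcX (hlam1 ▸ hiX)
  | _ + 2 => exact hc (hlam1 ▸ hbefore 1 (by omega))

end CEGS

def fiveStateSucc : Fin 5 → Fin 5 := ![2, 4, 1, 4, 4]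

lemma fiveStateSucc_iterate_three (q : Fin 5) : fiveStateSucc^[3] q = 4 := by
  fin_cases q <;> rfl

abbrev fiveStateModel : CEGS where
  Agt := Unit
  St := Fin 5
  AP := Unit
  Act := Unit
  agtFin := inferInstance
  agtNe := inferInstance
  stNe := inferInstance
  actFin := inferInstance
  actNe := inferInstance
  V := fun _ => ∅
  d := fun _ _ => Set.univ
  d_ne := fun _ _ => Set.univ_nonempty
  o := fun q _ => fiveStateSucc q
  sim := fun _ q q' => q.val / 2 = q'.val / 2
  sim_equiv := fun _ => ⟨fun _ => rfl, Eq.symm, Eq.trans⟩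
  uniform := fun _ _ _ _ => rfl

lemma fiveStateModel_simC_iff {q q' : Fin 5} :
    fiveStateModel.simC {()} q q' ↔ q.val / 2 = q'.val / 2 := by
  refine ⟨fun h => ?_, fun h => CEGS.simC_of_sim (M := fiveStateModel) (Set.mem_singleton ()) h⟩
  induction h with
  | single h => obtain ⟨_, -, h⟩ := h; exact h
  | tail _ h ih => obtain ⟨_, -, h⟩ := h; exact ih.trans h

lemma fiveStateModel_canReach (q : Fin 5) : fiveStateModel.CanReach {()} {4} q := by
  refine ⟨fun _ _ => (), fun _ _ => ⟨fun _ => trivial, fun _ _ _ => rfl⟩, ?_⟩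
  rintro lam ⟨-, -, q', -, hlam⟩
  exact ⟨3, (hlam.eq_iterate (fun _ _ => rfl) 3).trans (fiveStateSucc_iterate_three q')⟩

lemma fiveStateModel_nextStead_subset :
    fiveStateModel.NextStead {()} {4} ⊆ {4} := by
  intro q hq
  by_contra hq4
  have exit (b : Fin 5) (hb : q.val / 2 = b.val / 2) (hb4 : b ≠ 4) (hc4 : fiveStateSucc b ≠ 4)
      (hc : q.val / 2 ≠ (fiveStateSucc b).val / 2) : False :=
    CEGS.not_mem_nextStead_of_forced_exit (c := fiveStateSucc b)
      (fiveStateModel_simC_iff.mpr hb) hb4 hc4 (mt fiveStateModel_simC_iff.mp hc)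
      (fun _ _ => rfl) hq
  fin_cases q
  · exact exit 0 rfl (by decide) (by decide) (by decide)
  · exact exit 0 rfl (by decide) (by decide) (by decide)
  · exact exit 2 rfl (by decide) (by decide) (by decide)
  · exact exit 2 rfl (by decide) (by decide) (by decide)
  · exact hq4 rfl

/-- the steadfast fixpoint lower bound for reachability is not tight
in general. -/
theorem steadfast_fixpoint_not_tight :
    ∃ (M : CEGS) (a : M.Agt) (P : Set M.St) (q : M.St),
      M.CanReach {a} P q ∧
      q ∉ lfpSet (fun X => M.Know a P ∪ M.NextStead {a} X) := by
  refine ⟨fiveStateModel, (), {4}, 0, fiveStateModel_canReach 0, fun h0 => ?_⟩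
  have hprefixed : fiveStateModel.Know () {4} ∪ fiveStateModel.NextStead {()} {4} ⊆ {4} :=
    Set.union_subset (CEGS.know_subset _ _) fiveStateModel_nextStead_subset
  exact absurd (lfpSet_subset_of_prefixed hprefixed h0) (by decide)
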